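/- Let R be an associative ring with 1, n ≥ 3, pairwise distinct indices i, j, h, and elements a, b, c ∈ R. Then in GL(n,R) one has the conjugation identity: t_{ji}(c) · [t_{ih}(a), t_{hj}(b)] · t_{ji}(c)⁻¹ = [t_{jh}(ca)·t_{ih}(a), t_{hj}(b)·t_{hi}(-bc)]. -/

import Mathlib

open Matrix
open scoped commutatorElement

/-- `GL(n,R)` over an associative ring `R` with `1`, as units of the matrix ring. -/
abbrev GLn (n : ℕ) (R : Type*) [Ring R] := (Matrix (Fin n) (Fin n) R)ˣ

/-- The elementary transvection `t_{ij}(c) = e + c·e_{ij}`, for `i ≠ j`. -/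
def t {R : Type*} [Ring R] {n : ℕ} (i j : Fin n) (hij : i ≠ j) (c : R) :
    GLn n R :=
  ⟨1 + Matrix.single i j c, 1 - Matrix.single i j c,
   by
    have h0 : single i j c * single i j c = 0 :=
      single_mul_single_of_ne (h := hij.symm) ..
    noncomm_ring
    simp [h0],
   by
    have h0 : single i j c * single i j c = 0 :=
      single_mul_single_of_ne (h := hij.symm) ..
    noncomm_ring
    simp [h0]⟩

lemma stdBasisMatrix_neg {R : Type*} [Ring R] {n : ℕ} (i j : Fin n) (c : R) :
    Matrix.single i j (-c) = -Matrix.single i j c := by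
  ext a b
  simp [Matrix.single]
  split <;> simp

lemma t_inv {R : Type*} [Ring R] {n : ℕ} (i j : Fin n) (hij : i ≠ j) (c : R) :
    (t i j hij c)⁻¹ = t i j hij (-c) := by
  apply Units.ext
  show (1 - Matrix.single i j c) = 1 + Matrix.single i j (-c)
  rw [stdBasisMatrix_neg, sub_eq_add_neg]

set_option maxHeartbeats 1000000 in
theorem stmt16 {R : Type*} [Ring R] {n : ℕ} (hn : 3 ≤ n) (i j h : Fin n)
    (hij : i ≠ j) (hih : i ≠ h) (hjh : j ≠ h) (a b c : R) :
    t j i hij.symm c * ⁅t i h hih a, t h j hjh.symm b⁆ * (t j i hij.symm c)⁻¹ =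
      ⁅t j h hjh (c * a) * t i h hih a,
        t h j hjh.symm b * t h i hih.symm (-(b * c))⁆ := by
  have hji := hij.symm
  have hhi := hih.symm
  have hhj := hjh.symm
  simp only [commutatorElement_def, _root_.mul_inv_rev, t_inv]
  apply Units.ext
  simp only [Units.val_mul, t, Units.val_mk]
  simp only [stdBasisMatrix_neg, mul_add, add_mul, mul_one, one_mul, mul_neg, neg_mul,
    neg_neg, neg_add, single_mul_single_same, single_mul_single_of_ne, hij, hji, hih, hhi,
    hjh, hhj, mul_zero, zero_mul, neg_zero, add_zero, zero_add, ne_eq, not_false_iff]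
  simp only [mul_assoc]
  abel
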